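/- Szemerédi's theorem implies that the Erdős set E has Hausdorff dimension 0. More precisely, assuming that every subset of ℕ with positive upper natural density contains arbitrarily long arithmetic progressions, each set F_i (i ≥ 3) has upper box dimension 0, and hence dim_H E = 0. -/

import Mathlib

open Filter MeasureTheory Set
open scoped ENNReal

/-- The `n`-th binary digit of `x ∈ [0,1)` (dyadic rationals get the
terminating expansion, i.e. the one with finitely many `1`'s). -/
noncomputable def digit (x : ℝ) (n : ℕ) : ℕ := (⌊x * 2 ^ n⌋).toNat % 2

/-- Positions of digit `1` in the binary expansion of `x`. -/
def onesOf (x : ℝ) : Set ℕ := {n : ℕ | digit x n = 1}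

/-- `A` contains an `m`-term arithmetic progression. -/
def HasAP (A : Set ℕ) (m : ℕ) : Prop :=
  ∃ a d : ℕ, 1 ≤ d ∧ ∀ t < m, a + t * d ∈ A

/-- `F i`: numbers in `[0,1)` whose binary expansion contains no `i`-term
arithmetic progression of positions of digit `1`. -/
noncomputable def F (i : ℕ) : Set ℝ :=
  {x ∈ Set.Ico (0 : ℝ) 1 | ¬ HasAP (onesOf x) i}

/-- The Erdős set. -/
noncomputable def E : Set ℝ := ⋃ i, ⋃ (_ : 3 ≤ i), F i

/-- Minimal number of closed balls of radius `r` needed to cover `A`. -/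
noncomputable def covN (A : Set ℝ) (r : ℝ) : ℕ∞ :=
  ⨅ (t : Finset ℝ) (_ : A ⊆ ⋃ x ∈ t, Metric.closedBall x r), (t.card : ℕ∞)

/-- Upper box dimension, computed along scales `2⁻¹ ^ N`. -/
noncomputable def ubox (A : Set ℝ) : ℝ≥0∞ :=
  Filter.limsup (fun N : ℕ =>
    if covN A ((2 : ℝ)⁻¹ ^ N) = ⊤ then (⊤ : ℝ≥0∞)
    else ENNReal.ofReal (Real.logb 2 ((covN A ((2 : ℝ)⁻¹ ^ N)).toNat) / N)) Filter.atTop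

/-- Upper natural density of a set of naturals. -/
noncomputable def upperDensity (A : Set ℕ) : ℝ :=
  Filter.limsup (fun n : ℕ => ((A ∩ Set.Icc 1 n).ncard : ℝ) / n) Filter.atTop

/-!
By Szemerédi's theorem, an AP-free subset of `[1, N]` has `o(N)` elements: otherwise AP-free sets
of density `≥ ε` at infinitely many scales, placed in blocks separated by long and fast-growing
gaps, would glue to a set of positive upper density with no `i`-term AP, since such an AP cannot
jump between blocks. Up to distance `2⁻¹ ^ N`, a point of `F i` is determined by the positions of
its ones among its first `N` digits, a sparse subset of `[1, N]`, and there are only `2 ^ o(N)`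
of those. Covers of `F i` by `2 ^ o(N)` balls of radius `2⁻¹ ^ N` give upper box dimension `0`
and, through the Hausdorff measure, Hausdorff dimension `0`, which passes to the countable
union `E`.
-/

open scoped Finset Topology

lemma HasAP.mono {A B : Set ℕ} {m : ℕ} (hA : HasAP A m) (h : A ⊆ B) : HasAP B m := by
  obtain ⟨a, d, hd, ht⟩ := hA
  exact ⟨a, d, hd, fun t htm => h (ht t htm)⟩

lemma le_upperDensity_of_frequently {A : Set ℕ} {c : ℝ}
    (h : ∃ᶠ n in atTop, c ≤ ((A ∩ Icc 1 n).ncard : ℝ) / n) : c ≤ upperDensity A := by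
  refine le_limsup_of_frequently_le h (isBoundedUnder_of ⟨1, fun n => ?_⟩)
  have hcard : (A ∩ Icc 1 n).ncard ≤ n := by
    simpa using ncard_le_ncard inter_subset_right (finite_Icc 1 n)
  exact div_le_one_of_le₀ (by exact_mod_cast hcard) n.cast_nonneg

namespace Glue

open Finset

variable {e L : ℕ → ℕ} {S : ℕ → Finset ℕ}

def block (e L : ℕ → ℕ) (S : ℕ → Finset ℕ) (k : ℕ) : Set ℕ :=
  (e k + L k + ·) '' (S k : Set ℕ)

def glue (e L : ℕ → ℕ) (S : ℕ → Finset ℕ) : Set ℕ := ⋃ k, block e L S k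

/-- Block `k` lies in `(e k + L k, e (k + 1)]`; the gap `(e k, e k + L k]` before it is longer than
the block and than everything to its left. -/
structure Spaced (e L : ℕ → ℕ) (S : ℕ → Finset ℕ) : Prop where
  step : ∀ k, e (k + 1) = e k + 2 * L k
  lt : ∀ k, e k < L k
  subset_Icc : ∀ k, S k ⊆ Icc 1 (L k)

lemma Spaced.bounds_of_mem_block (h : Spaced e L S) {k n : ℕ} (hn : n ∈ block e L S k) :
    e k + L k + 1 ≤ n ∧ n ≤ e (k + 1) := by
  obtain ⟨s, hs, rfl⟩ := hn
  have := mem_Icc.1 (h.subset_Icc k hs)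
  have := h.step k
  dsimp only
  omega

lemma Spaced.le_of_mem_block_of_lt (h : Spaced e L S) {k k' x : ℕ} (hx : x ∈ block e L S k)
    (hk : k < k') : x ≤ e k' :=
  (h.bounds_of_mem_block hx).2.trans
    (monotone_nat_of_le_succ (fun j => by rw [h.step j]; omega) hk)

lemma Spaced.block_le_of_le (h : Spaced e L S) {k k' x y : ℕ} (hx : x ∈ block e L S k)
    (hy : y ∈ block e L S k') (hxy : x ≤ y) : k ≤ k' := by
  by_contra! hk
  have := h.le_of_mem_block_of_lt hy hk
  have := h.bounds_of_mem_block hx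
  omega

lemma Spaced.block_eq_of_le_two_mul (h : Spaced e L S) {k k' x y : ℕ} (hx : x ∈ block e L S k)
    (hy : y ∈ block e L S k') (hxy : x ≤ y) (hyx : y ≤ 2 * x) : k = k' := by
  refine (h.block_le_of_le hx hy hxy).eq_of_not_lt fun hk => ?_
  have := h.le_of_mem_block_of_lt hx hk
  have := h.bounds_of_mem_block hy
  have := h.lt k'
  omega

lemma Spaced.block_eq_of_sub_le (h : Spaced e L S) {k k' x y z : ℕ} (hx : x ∈ block e L S k)
    (hy : y ∈ block e L S k') (hz : z ∈ block e L S k') (hxy : x ≤ y)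
    (hyz : y - x ≤ z - y) : k = k' := by
  refine (h.block_le_of_le hx hy hxy).eq_of_not_lt fun hk => ?_
  have := h.le_of_mem_block_of_lt hx hk
  have := h.bounds_of_mem_block hy
  have := h.bounds_of_mem_block hz
  have := h.step k'
  omega

/-- In an AP with at least three terms, consecutive terms after the first are at most a factor
two apart, and the first step is as short as the second. -/
lemma Spaced.not_hasAP_glue (h : Spaced e L S) {i : ℕ} (hi : 3 ≤ i)
    (hS : ∀ k, ¬ HasAP (S k : Set ℕ) i) : ¬ HasAP (glue e L S) i := by
  rintro ⟨a, d, hd, hmem⟩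
  obtain ⟨K, hK⟩ := mem_iUnion.1 (hmem 1 (by omega))
  have htail : ∀ t, 1 ≤ t → t < i → a + t * d ∈ block e L S K := by
    intro t ht
    induction t, ht using Nat.le_induction with
    | base => exact fun _ => hK
    | succ t ht ih =>
      intro hti
      obtain ⟨k', hk'⟩ := mem_iUnion.1 (hmem (t + 1) hti)
      have hdt : d ≤ t * d := Nat.le_mul_of_pos_left d ht
      rwa [h.block_eq_of_le_two_mul (ih (by omega)) hk' (by nlinarith) (by nlinarith)]
  have hhead : a ∈ block e L S K := by
    obtain ⟨k₀, hk₀⟩ := mem_iUnion.1 (hmem 0 (by omega))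
    simp only [zero_mul, add_zero] at hk₀
    have h1 := htail 1 le_rfl (by omega)
    have h2 := htail 2 (by omega) (by omega)
    rwa [← h.block_eq_of_sub_le hk₀ h1 h2 (by omega) (by omega)]
  have hall : ∀ t < i, a + t * d ∈ block e L S K := fun t ht => by
    rcases t.eq_zero_or_pos with rfl | ht0
    · simpa using hhead
    · exact htail t ht0 ht
  have hstart := (h.bounds_of_mem_block hhead).1
  refine hS K ⟨a - (e K + L K), d, hd, fun t ht => ?_⟩
  obtain ⟨s, hs, hst⟩ := hall t ht
  convert hs using 1
  dsimp only at hst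
  omega

lemma Spaced.card_le_ncard_glue_inter (h : Spaced e L S) (k : ℕ) :
    #(S k) ≤ (glue e L S ∩ Set.Icc 1 (e (k + 1))).ncard := by
  have hsub : block e L S k ⊆ glue e L S ∩ Set.Icc 1 (e (k + 1)) := fun n hn =>
    ⟨mem_iUnion.2 ⟨k, hn⟩, by have := h.bounds_of_mem_block hn; omega,
      (h.bounds_of_mem_block hn).2⟩
  calc #(S k) = (block e L S k).ncard := by
        rw [block, ncard_image_of_injective _ (add_right_injective _), ncard_coe_finset]
    _ ≤ _ := ncard_le_ncard hsub ((finite_Icc _ _).subset inter_subset_right)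

lemma Spaced.le_upperDensity_glue (h : Spaced e L S) {c : ℝ} (hc : 0 ≤ c)
    (hcard : ∀ k, c * L k ≤ #(S k)) : c / 3 ≤ upperDensity (glue e L S) := by
  have hmono : StrictMono e :=
    strictMono_nat_of_lt_succ fun k => by have := h.lt k; rw [h.step]; omega
  refine le_upperDensity_of_frequently (frequently_atTop.2 fun m => ⟨e (m + 1), ?_, ?_⟩)
  · exact m.le_succ.trans hmono.le_apply
  have hL := h.lt m
  have hstep := h.step m
  have hn : (e (m + 1) : ℝ) ≤ 3 * L m := by exact_mod_cast (show e (m + 1) ≤ 3 * L m by omega)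
  have hpos : (0 : ℝ) < e (m + 1) := by exact_mod_cast (show 0 < e (m + 1) by omega)
  rw [le_div_iff₀ hpos]
  calc c / 3 * e (m + 1) ≤ c * L m := by nlinarith
    _ ≤ #(S m) := hcard m
    _ ≤ _ := by exact_mod_cast h.card_le_ncard_glue_inter m

end Glue

lemma eventually_card_le_of_not_hasAP
    (szemeredi : ∀ A : Set ℕ, 0 < upperDensity A → ∀ k : ℕ, HasAP A k)
    {i : ℕ} (hi : 3 ≤ i) {ε : ℝ} (hε : 0 < ε) :
    ∀ᶠ N in atTop, ∀ S : Finset ℕ, S ⊆ Finset.Icc 1 N → ¬ HasAP (S : Set ℕ) i →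
      (#S : ℝ) ≤ ε * N := by
  by_contra hne
  simp only [not_eventually, frequently_atTop, not_forall, not_le] at hne
  choose L hL S hS hfree hcard using hne
  let e : ℕ → ℕ := fun k => Nat.rec 0 (fun _ a => a + 2 * L (a + 1)) k
  have hspaced : Glue.Spaced e (fun k => L (e k + 1)) (fun k => S (e k + 1)) :=
    ⟨fun _ => rfl, fun k => hL (e k + 1), fun k => hS (e k + 1)⟩
  refine hspaced.not_hasAP_glue hi (fun k => hfree (e k + 1)) (szemeredi _ ?_ i)
  exact (div_pos hε three_pos).trans_le
    (hspaced.le_upperDensity_glue hε.le fun k => (hcard (e k + 1)).le)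

lemma natFloor_mul_two_pow_succ (x : ℝ) (n : ℕ) :
    ⌊x * 2 ^ (n + 1)⌋₊ = 2 * ⌊x * 2 ^ n⌋₊ + digit x (n + 1) := by
  have hhalf : ⌊x * 2 ^ n⌋₊ = ⌊x * 2 ^ (n + 1)⌋₊ / 2 := by
    rw [← Nat.floor_div_ofNat, pow_succ, ← mul_assoc, mul_div_cancel_right₀ _ two_ne_zero]
  rw [digit, Int.floor_toNat, hhalf]
  omega

lemma natFloor_mul_two_pow_eq_of_digit_eq {x y : ℝ} (hx : x ∈ Ico 0 1) (hy : y ∈ Ico 0 1)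
    {N : ℕ} (h : ∀ n ∈ Finset.Icc 1 N, digit x n = digit y n) :
    ⌊x * 2 ^ N⌋₊ = ⌊y * 2 ^ N⌋₊ := by
  induction N with
  | zero => simp [Nat.floor_eq_zero.2 hx.2, Nat.floor_eq_zero.2 hy.2]
  | succ N ih =>
    rw [natFloor_mul_two_pow_succ x, natFloor_mul_two_pow_succ y,
      ih fun n hn => h n (Finset.Icc_subset_Icc_right N.le_succ hn),
      h (N + 1) (Finset.mem_Icc.2 ⟨N.succ_pos, le_rfl⟩)]

lemma dist_le_of_digit_eq {x y : ℝ} (hx : x ∈ Ico 0 1) (hy : y ∈ Ico 0 1) {N : ℕ}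
    (h : ∀ n ∈ Finset.Icc 1 N, digit x n = digit y n) : dist x y ≤ 2⁻¹ ^ N := by
  have hfloor : ⌊x * 2 ^ N⌋ = ⌊y * 2 ^ N⌋ := by
    rw [← Int.natCast_floor_eq_floor (by have := hx.1; positivity),
      ← Int.natCast_floor_eq_floor (by have := hy.1; positivity),
      natFloor_mul_two_pow_eq_of_digit_eq hx hy h]
  have hlt := Int.abs_sub_lt_one_of_floor_eq_floor hfloor
  rw [← sub_mul, abs_mul, abs_of_pos (by positivity : (0 : ℝ) < 2 ^ N)] at hlt
  rw [Real.dist_eq, inv_pow, ← one_div, le_div_iff₀ (by positivity)]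
  exact hlt.le

lemma exists_cover_of_fibres {X ι : Type*} [PseudoMetricSpace X] {A : Set X} {r : ℝ}
    (s : Finset ι) (f : X → ι) (hf : ∀ x ∈ A, f x ∈ s)
    (hfib : ∀ x ∈ A, ∀ y ∈ A, f x = f y → dist x y ≤ r) :
    ∃ t : Finset X, A ⊆ ⋃ c ∈ t, Metric.closedBall c r ∧ #t ≤ #s := by
  classical
  rcases A.eq_empty_or_nonempty with rfl | ⟨x₀, hx₀⟩
  · exact ⟨∅, empty_subset _, by simp⟩
  have : Nonempty X := ⟨x₀⟩
  refine ⟨s.image (Function.invFunOn f A), fun x hx => ?_, Finset.card_image_le⟩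
  have hex : ∃ y ∈ A, f y = f x := ⟨x, hx, rfl⟩
  refine mem_biUnion (Finset.mem_coe.2 (Finset.mem_image_of_mem _ (hf x hx))) ?_
  exact Metric.mem_closedBall.2
    (hfib x hx _ (Function.invFunOn_mem hex) (Function.invFunOn_eq hex).symm)

/-- Each counted `T` has `x ^ μ ≤ x ^ #T`, and `∑_{T ⊆ s} x ^ #T = (1 + x) ^ #s`. -/
lemma card_filter_powerset_card_le {α : Type*} (s : Finset α) {μ x : ℝ} (hx0 : 0 < x)
    (hx1 : x ≤ 1) :
    (#(s.powerset.filter fun T => (#T : ℝ) ≤ μ) : ℝ) ≤ (1 + x) ^ #s / x ^ μ := by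
  rw [le_div_iff₀ (Real.rpow_pos_of_pos hx0 μ)]
  calc (#(s.powerset.filter fun T => (#T : ℝ) ≤ μ) : ℝ) * x ^ μ
      = ∑ T ∈ s.powerset.filter fun T => (#T : ℝ) ≤ μ, x ^ μ := by
        rw [Finset.sum_const, nsmul_eq_mul]
    _ ≤ ∑ T ∈ s.powerset.filter fun T => (#T : ℝ) ≤ μ, x ^ #T := by
        refine Finset.sum_le_sum fun T hT => ?_
        rw [← Real.rpow_natCast]
        exact Real.rpow_le_rpow_of_exponent_ge hx0 hx1 (Finset.mem_filter.1 hT).2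
    _ ≤ ∑ T ∈ s.powerset, x ^ #T :=
        Finset.sum_le_sum_of_subset_of_nonneg (Finset.filter_subset _ _)
          fun _ _ _ => by positivity
    _ = (1 + x) ^ #s := by
        simpa [add_comm] using Finset.sum_pow_mul_eq_add_pow x 1 s

lemma exists_pow_div_rpow_le {δ : ℝ} (hδ : 0 < δ) :
    ∃ ε : ℝ, 0 < ε ∧ ∃ x : ℝ, 0 < x ∧ x ≤ 1 ∧
      ∀ N : ℕ, (1 + x) ^ N / x ^ (ε * N) ≤ 2 ^ (δ * N) := by
  set x := min 1 ((2 : ℝ) ^ (δ / 2) - 1)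
  have hx0 : 0 < x := lt_min one_pos (sub_pos.2 (Real.one_lt_rpow one_lt_two (half_pos hδ)))
  have hx : 1 + x ≤ 2 ^ (δ / 2) := by linarith [min_le_right 1 ((2 : ℝ) ^ (δ / 2) - 1)]
  have hlim : ∀ᶠ ε in 𝓝[>] (0 : ℝ), 2 ^ (-(δ / 2)) < x ^ ε ∧ 0 < ε := by
    refine (continuousAt_const.eventually_lt (Real.continuousAt_const_rpow hx0.ne') ?_)
      |>.filter_mono nhdsWithin_le_nhds |>.and self_mem_nhdsWithin
    rw [Real.rpow_zero]
    exact Real.rpow_lt_one_of_one_lt_of_neg one_lt_two (by linarith)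
  obtain ⟨ε, hεx, hε⟩ := hlim.exists
  refine ⟨ε, hε, x, hx0, min_le_left _ _, fun N => ?_⟩
  have hbase : (1 + x) / x ^ ε ≤ 2 ^ δ := by
    rw [div_le_iff₀ (Real.rpow_pos_of_pos hx0 ε)]
    calc 1 + x ≤ 2 ^ (δ / 2) := hx
      _ = 2 ^ δ * 2 ^ (-(δ / 2)) := by rw [← Real.rpow_add two_pos]; ring_nf
      _ ≤ 2 ^ δ * x ^ ε := by gcongr
  rw [Real.rpow_mul_natCast hx0.le, Real.rpow_mul_natCast zero_le_two, ← div_pow]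
  exact pow_le_pow_left₀ (by positivity) hbase N

def HasCoversAtRate (A : Set ℝ) (δ : ℝ) : Prop :=
  ∀ᶠ N : ℕ in atTop, ∃ t : Finset ℝ,
    A ⊆ ⋃ c ∈ t, Metric.closedBall c (2⁻¹ ^ N) ∧ (#t : ℝ) ≤ 2 ^ (δ * N)

lemma HasCoversAtRate.ubox_le {A : Set ℝ} {δ : ℝ} (h : HasCoversAtRate A δ) :
    ubox A ≤ ENNReal.ofReal δ := by
  refine limsup_le_of_le (by isBoundedDefault) ?_
  filter_upwards [h, eventually_gt_atTop 0] with N ⟨t, hcover, hcard⟩ hN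
  have hcov : covN A (2⁻¹ ^ N) ≤ #t := iInf₂_le t hcover
  have hne := ne_top_of_le_ne_top (ENat.natCast_ne_top _) hcov
  have hc : (covN A (2⁻¹ ^ N)).toNat ≤ #t := by
    simpa using ENat.toNat_le_toNat hcov (ENat.natCast_ne_top _)
  rw [if_neg hne]
  rcases (covN A (2⁻¹ ^ N)).toNat.eq_zero_or_pos with h0 | hpos
  · rw [h0]; simp
  refine ENNReal.ofReal_le_ofReal ?_
  rw [div_le_iff₀ (by positivity), Real.logb_le_iff_le_rpow one_lt_two (by positivity)]
  exact (Nat.cast_le.2 hc).trans hcard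

lemma Real.ediam_closedBall (c r : ℝ) :
    Metric.ediam (Metric.closedBall c r) = ENNReal.ofReal (2 * r) := by
  rw [Real.closedBall_eq_Icc, Real.ediam_Icc]
  ring_nf

lemma tendsto_ofReal_mul_pow_atTop_nhds_zero {q : ℝ} (hq0 : 0 ≤ q) (hq1 : q < 1) (a : ℝ) :
    Tendsto (fun N : ℕ => ENNReal.ofReal (a * q ^ N)) atTop (𝓝 0) := by
  simpa using ENNReal.tendsto_ofReal
    (tendsto_const_nhds (x := a) |>.mul (tendsto_pow_atTop_nhds_zero_of_lt_one hq0 hq1))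

lemma sum_ediam_closedBall_rpow_le {δ : ℝ} (d : ℝ) {N : ℕ} {t : Finset ℝ}
    (ht : (#t : ℝ) ≤ 2 ^ (δ * N)) :
    ∑ c : t, Metric.ediam (Metric.closedBall (c : ℝ) (2⁻¹ ^ N)) ^ d
      ≤ ENNReal.ofReal (2 ^ d * (2 ^ (δ - d)) ^ N) := by
  have htwo : (2 : ℝ) * 2⁻¹ ^ N = 2 ^ (1 - (N : ℝ)) := by
    rw [sub_eq_add_neg, Real.rpow_add two_pos, Real.rpow_one, Real.rpow_neg zero_le_two,
      Real.rpow_natCast, inv_pow]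
  simp only [Real.ediam_closedBall, Finset.sum_const, Finset.card_univ, Fintype.card_coe,
    nsmul_eq_mul]
  rw [ENNReal.ofReal_rpow_of_pos (by positivity), ← ENNReal.ofReal_natCast,
    ← ENNReal.ofReal_mul (by positivity)]
  refine ENNReal.ofReal_le_ofReal ?_
  calc (#t : ℝ) * (2 * 2⁻¹ ^ N) ^ d ≤ 2 ^ (δ * N) * (2 * 2⁻¹ ^ N) ^ d := by gcongr
    _ = 2 ^ d * (2 ^ (δ - d)) ^ N := by
        rw [htwo, ← Real.rpow_mul zero_le_two, ← Real.rpow_mul_natCast zero_le_two,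
          ← Real.rpow_add two_pos, ← Real.rpow_add two_pos]
        ring_nf

lemma HasCoversAtRate.hausdorffMeasure_eq_zero {A : Set ℝ} {δ d : ℝ} (h : HasCoversAtRate A δ)
    (hδd : δ < d) : μH[d] A = 0 := by
  obtain ⟨N₀, hN₀⟩ := eventually_atTop.1 h
  have hex : ∀ N, ∃ t : Finset ℝ, N₀ ≤ N →
      A ⊆ ⋃ c ∈ t, Metric.closedBall c (2⁻¹ ^ N) ∧ (#t : ℝ) ≤ 2 ^ (δ * N) :=
    fun N => if hN : N₀ ≤ N then (hN₀ N hN).imp fun _ ht _ => ht else ⟨∅, fun h => absurd h hN⟩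
  choose t ht using hex
  refine le_antisymm ((Measure.hausdorffMeasure_le_liminf_sum d A _
    (tendsto_ofReal_mul_pow_atTop_nhds_zero (by norm_num) (by norm_num) 2)
    (fun N (c : t N) => Metric.closedBall (c : ℝ) (2⁻¹ ^ N))
    (Eventually.of_forall fun N c => (Real.ediam_closedBall _ _).le)
    ((eventually_ge_atTop N₀).mono fun N hN x hx => ?_)).trans ?_) zero_le
  · obtain ⟨c, hc, hxc⟩ := mem_iUnion₂.1 ((ht N hN).1 hx)
    exact mem_iUnion.2 ⟨⟨c, hc⟩, hxc⟩
  calc liminf _ atTop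
        ≤ liminf (fun N : ℕ => ENNReal.ofReal (2 ^ d * (2 ^ (δ - d)) ^ N)) atTop :=
        liminf_le_liminf ((eventually_ge_atTop N₀).mono fun N hN =>
          sum_ediam_closedBall_rpow_le d (ht N hN).2)
    _ = 0 := tendsto_ofReal_mul_pow_atTop_nhds_zero (by positivity)
        (Real.rpow_lt_one_of_one_lt_of_neg one_lt_two (sub_neg.2 hδd)) _ |>.liminf_eq

noncomputable def onesUpTo (x : ℝ) (N : ℕ) : Finset ℕ :=
  (Finset.Icc 1 N).filter (digit x · = 1)

lemma digit_eq_of_onesUpTo_eq {x y : ℝ} {N : ℕ} (h : onesUpTo x N = onesUpTo y N) :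
    ∀ n ∈ Finset.Icc 1 N, digit x n = digit y n := by
  intro n hn
  have hiff : digit x n = 1 ↔ digit y n = 1 := by
    simpa [onesUpTo, hn] using congrArg (n ∈ ·) h
  have hx : digit x n < 2 := Nat.mod_lt _ two_pos
  have hy : digit y n < 2 := Nat.mod_lt _ two_pos
  omega

lemma hasCoversAtRate_F
    (szemeredi : ∀ A : Set ℕ, 0 < upperDensity A → ∀ k : ℕ, HasAP A k)
    {i : ℕ} (hi : 3 ≤ i) {δ : ℝ} (hδ : 0 < δ) : HasCoversAtRate (F i) δ := by
  obtain ⟨ε, hε, x, hx0, hx1, hrate⟩ := exists_pow_div_rpow_le hδ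
  filter_upwards [eventually_card_le_of_not_hasAP szemeredi hi hε] with N hN
  set s := (Finset.Icc 1 N).powerset.filter fun T => (#T : ℝ) ≤ ε * N
  have hf : ∀ y ∈ F i, onesUpTo y N ∈ s := fun y hy =>
    Finset.mem_filter.2 ⟨Finset.mem_powerset.2 (Finset.filter_subset _ _),
      hN _ (Finset.filter_subset _ _)
        fun hAP => hy.2 (hAP.mono fun n hn => (Finset.mem_filter.1 hn).2)⟩
  obtain ⟨t, hcover, hcard⟩ := exists_cover_of_fibres s (onesUpTo · N) hf
    fun y hy z hz hyz => dist_le_of_digit_eq hy.1 hz.1 (digit_eq_of_onesUpTo_eq hyz)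
  refine ⟨t, hcover, ?_⟩
  calc (#t : ℝ) ≤ #s := by exact_mod_cast hcard
    _ ≤ (1 + x) ^ N / x ^ (ε * N) := by
        simpa using card_filter_powerset_card_le (Finset.Icc 1 N) (μ := ε * N) hx0 hx1
    _ ≤ 2 ^ (δ * N) := hrate N

lemma ubox_eq_zero_of_hasCoversAtRate {A : Set ℝ} (h : ∀ δ > 0, HasCoversAtRate A δ) :
    ubox A = 0 := by
  refine le_antisymm (ENNReal.le_of_forall_pos_le_add fun ε hε _ => ?_) zero_le
  rw [zero_add, ← ENNReal.ofReal_coe_nnreal]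
  exact (h ε hε).ubox_le

lemma dimH_eq_zero_of_hasCoversAtRate {A : Set ℝ} (h : ∀ δ > 0, HasCoversAtRate A δ) :
    dimH A = 0 := by
  refine le_antisymm (dimH_le fun d hd => ?_) zero_le
  by_contra! hpos
  have hd0 : (0 : ℝ) < d := by exact_mod_cast hpos
  rw [(h (d / 2) (half_pos hd0)).hausdorffMeasure_eq_zero (half_lt_self hd0)] at hd
  exact ENNReal.zero_ne_top hd

theorem stmt10
    (szemeredi : ∀ A : Set ℕ, 0 < upperDensity A → ∀ k : ℕ, HasAP A k) :
    (∀ i : ℕ, 3 ≤ i → ubox (F i) = 0) ∧ dimH E = 0 := by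
  have hF : ∀ i, 3 ≤ i → ∀ δ > 0, HasCoversAtRate (F i) δ :=
    fun i hi δ hδ => hasCoversAtRate_F szemeredi hi hδ
  refine ⟨fun i hi => ubox_eq_zero_of_hasCoversAtRate (hF i hi), ?_⟩
  simp only [E, dimH_iUnion, ENNReal.iSup_eq_zero]
  exact fun i hi => dimH_eq_zero_of_hasCoversAtRate (hF i hi)
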